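/- arXiv:2211.07606 — 3 statements merged into one kernel-verified Lean document; each statement's English description precedes it below -/
import Mathlib

section
/- In any bipartite graph H with parts A and B where every vertex in A has degree at least 1 and every vertex in B has degree at most φ, every maximal matching of H has size at least min(|B|, |A|/φ). -/
/-- In a bipartite graph with parts A and B where every vertex of A has degree at least 1
and every vertex of B has degree at most φ, every maximal matching has size at least
min(|B|, |A|/φ). A matching is represented as a finset of pairs (a, b) with a ∈ A, b ∈ B,
adjacent endpoints, and pairwise distinct endpoints; maximality says every A-B edge
touches a matched vertex. -/
theorem bipartite_maximal_matching_lower_bound {V : Type*} [Fintype V] [DecidableEq V]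
    (G : SimpleGraph V) [DecidableRel G.Adj]
    (A B : Finset V) (hAB : Disjoint A B)
    (hbip : ∀ u v : V, G.Adj u v → (u ∈ A ∧ v ∈ B) ∨ (u ∈ B ∧ v ∈ A))
    (φ : ℝ) (hφ : 1 ≤ φ)
    (hdegA : ∀ a ∈ A, ∃ b ∈ B, G.Adj a b)
    (hdegB : ∀ b ∈ B, ((G.neighborFinset b).card : ℝ) ≤ φ)
    (M : Finset (V × V))
    (hMedge : ∀ p ∈ M, p.1 ∈ A ∧ p.2 ∈ B ∧ G.Adj p.1 p.2)
    (hMdisj : ∀ p ∈ M, ∀ q ∈ M, p ≠ q →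
      p.1 ≠ q.1 ∧ p.1 ≠ q.2 ∧ p.2 ≠ q.1 ∧ p.2 ≠ q.2)
    (hMmax : ∀ a ∈ A, ∀ b ∈ B, G.Adj a b →
      ∃ p ∈ M, a = p.1 ∨ a = p.2 ∨ b = p.1 ∨ b = p.2) :
    min (B.card : ℝ) ((A.card : ℝ) / φ) ≤ (M.card : ℝ) := by
  have hφ0 : (0:ℝ) < φ := lt_of_lt_of_le one_pos hφ
  refine le_trans (min_le_right _ _) ?_
  rw [div_le_iff₀ hφ0]
  set B1 : Finset V := M.image Prod.snd with hB1
  -- every a ∈ A is a neighbor of some matched B-vertex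
  have hsub : A ⊆ B1.biUnion (fun b => G.neighborFinset b) := by
    intro a ha
    obtain ⟨b, hb, hab⟩ := hdegA a ha
    obtain ⟨p, hp, hcase⟩ := hMmax a ha b hb hab
    obtain ⟨hp1, hp2, hadj⟩ := hMedge p hp
    rw [Finset.mem_biUnion]
    rcases hcase with h | h | h | h
    · exact ⟨p.2, Finset.mem_image_of_mem _ hp,
        by rw [SimpleGraph.mem_neighborFinset]; exact (h ▸ hadj).symm⟩
    · exact absurd hp2 (Finset.disjoint_left.mp hAB (h ▸ ha))
    · exact absurd hp1 (Finset.disjoint_left.mp hAB.symm (h ▸ hb))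
    · exact ⟨b, h ▸ Finset.mem_image_of_mem _ hp,
        by rw [SimpleGraph.mem_neighborFinset]; exact hab.symm⟩
  have hA1 : (A.card : ℝ) ≤ ∑ b ∈ B1, ((G.neighborFinset b).card : ℝ) := by
    have := le_trans (Finset.card_le_card hsub) (Finset.card_biUnion_le)
    exact_mod_cast this
  have hA2 : ∑ b ∈ B1, ((G.neighborFinset b).card : ℝ) ≤ (B1.card : ℝ) * φ := by
    have h : ∑ b ∈ B1, ((G.neighborFinset b).card : ℝ) ≤ ∑ _b ∈ B1, φ :=
      Finset.sum_le_sum fun b hb => ?_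
    · simpa [Finset.sum_const, nsmul_eq_mul, mul_comm] using h
    rw [hB1, Finset.mem_image] at hb
    obtain ⟨p, hp, rfl⟩ := hb
    exact hdegB _ (hMedge p hp).2.1
  have hB1c : (B1.card : ℝ) ≤ (M.card : ℝ) := by
    exact_mod_cast Finset.card_image_le
  calc (A.card : ℝ) ≤ (B1.card : ℝ) * φ := le_trans hA1 hA2
    _ ≤ (M.card : ℝ) * φ := by nlinarith
end

section
/- Let G be a graph with maximum degree Δ. Suppose for each index i in some set I we have a pair (u_i, w_i) of non-adjacent vertices of G such that the pairs are pairwise disjoint, and each of u_i, w_i has at most 4εΔ neighbors outside its own almost-clique, and no other vertex of the almost-clique of the pair is involved in any pair. Form the virtual graph H on the pairs, joining two pairs when some endpoint of one is adjacent to some endpoint of the other. Then assigning to each pair the list L(u_i) ∩ L(w_i) of colors available to both endpoints from palettes of size Δ minus at most 8εΔ conflicts yields a list-coloring instance on H in which every pair's list exceeds its H-degree, provided 16εΔ < Δ/2; in particular H is (deg+1)-list colorable and a proper H-coloring gives a same-coloring of each pair that extends to a proper partial coloring of G. -/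
/-!
Contract every pair `{u i, w i}` to a single vertex of the virtual graph `H`. A neighbour `j` of
`i` in `H` owns a vertex adjacent to `u i` or `w i`; that vertex lies outside the almost-clique
`C i`, and distinct neighbours own distinct such vertices because the pairs are disjoint. So the
`H`-degree of `i` is at most the number of outside neighbours of `u i` and `w i`, i.e. `8εΔ`,
which is less than `Δ - 8εΔ` when `16εΔ < Δ`. A greedy list colouring of `H` gives each pair
one common colour.
-/

open Finset Function

namespace SimpleGraph

variable {V ι α : Type*}

def virtualGraph (G : SimpleGraph V) (B : ι → Finset V) : SimpleGraph ι where
  Adj i j := i ≠ j ∧ ∃ x ∈ B i, ∃ y ∈ B j, G.Adj x y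
  symm := ⟨fun _ _ ⟨hij, x, hx, y, hy, hxy⟩ => ⟨hij.symm, y, hy, x, hx, hxy.symm⟩⟩
  loopless := ⟨fun _ h => h.1 rfl⟩

@[simp]
theorem virtualGraph_adj (G : SimpleGraph V) (B : ι → Finset V) {i j : ι} :
    (G.virtualGraph B).Adj i j ↔ i ≠ j ∧ ∃ x ∈ B i, ∃ y ∈ B j, G.Adj x y :=
  Iff.rfl

instance [DecidableEq ι] [DecidableEq V] (G : SimpleGraph V) [DecidableRel G.Adj]
    (B : ι → Finset V) : DecidableRel (G.virtualGraph B).Adj :=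
  inferInstanceAs (DecidableRel fun i j => i ≠ j ∧ ∃ x ∈ B i, ∃ y ∈ B j, G.Adj x y)

theorem virtualGraph_pair_adj [DecidableEq V] (G : SimpleGraph V) (u w : ι → V) {i j : ι} :
    (G.virtualGraph fun k => {u k, w k}).Adj i j ↔
      i ≠ j ∧ (G.Adj (u i) (u j) ∨ G.Adj (u i) (w j) ∨ G.Adj (w i) (u j) ∨
        G.Adj (w i) (w j)) := by
  simp only [virtualGraph_adj, mem_insert, mem_singleton, exists_eq_or_imp, exists_eq_left,
    or_assoc]

theorem degree_virtualGraph_le [Fintype ι] [DecidableEq ι] [DecidableEq V]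
    (G : SimpleGraph V) [Fintype V] [DecidableRel G.Adj] {B : ι → Finset V}
    (hB : Pairwise (Disjoint on B)) {i : ι} {C : Finset V}
    (hC : ∀ j, i ≠ j → Disjoint (B j) C) :
    (G.virtualGraph B).degree i ≤ #((B i).biUnion fun x => G.neighborFinset x \ C) := by
  set T := (B i).biUnion fun x => G.neighborFinset x \ C
  rw [← card_neighborFinset_eq_degree]
  calc #((G.virtualGraph B).neighborFinset i)
      ≤ #(((G.virtualGraph B).neighborFinset i).biUnion fun j => B j ∩ T) := by
        refine card_le_card_biUnion (fun j _ k _ hjk => ?_) fun j hj => ?_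
        · exact (hB hjk).mono inter_subset_left inter_subset_left
        · obtain ⟨hij, x, hx, y, hy, hxy⟩ := by simpa using hj
          have hyC : y ∉ C := Finset.disjoint_left.mp (hC j hij) hy
          exact ⟨y, mem_inter.mpr ⟨hy, mem_biUnion.mpr ⟨x, hx, by simp [hxy, hyC]⟩⟩⟩
    _ ≤ #T := card_le_card (biUnion_subset.mpr fun _ _ => inter_subset_right)

theorem degree_virtualGraph_pair_le [Fintype ι] [DecidableEq ι] [DecidableEq V]
    (G : SimpleGraph V) [Fintype V] [DecidableRel G.Adj] {u w : ι → V}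
    (hdisj : ∀ i j, i ≠ j → u i ≠ u j ∧ u i ≠ w j ∧ w i ≠ u j ∧ w i ≠ w j)
    {i : ι} {C : Finset V} (hC : ∀ j, i ≠ j → u j ∉ C ∧ w j ∉ C) :
    (G.virtualGraph fun k => {u k, w k}).degree i ≤
      #(G.neighborFinset (u i) \ C) + #(G.neighborFinset (w i) \ C) := by
  have hB : Pairwise (Disjoint on fun k => ({u k, w k} : Finset V)) := fun j k hjk => by
    simp only [onFun, disjoint_insert_left, disjoint_insert_right,
      disjoint_singleton_left, mem_insert, mem_singleton]
    grind
  have hBC : ∀ j, i ≠ j → Disjoint ({u j, w j} : Finset V) C := fun j hj => by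
    simpa [disjoint_insert_left] using hC j hj
  calc _ ≤ _ := G.degree_virtualGraph_le hB hBC
    _ ≤ _ := by rw [biUnion_insert, singleton_biUnion]; exact card_union_le _ _

theorem exists_listColoring_of_degree_lt [Fintype ι] (H : SimpleGraph ι) [DecidableRel H.Adj]
    (L : ι → Finset α) (hL : ∀ i, H.degree i < #(L i)) :
    ∃ c : ι → α, (∀ i, c i ∈ L i) ∧ ∀ i j, H.Adj i j → c i ≠ c j := by
  classical
  suffices ∀ s : Finset ι, ∃ c : ι → α, (∀ i, c i ∈ L i) ∧
      ∀ i ∈ s, ∀ j ∈ s, H.Adj i j → c i ≠ c j by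
    obtain ⟨c, hcL, hc⟩ := this univ
    exact ⟨c, hcL, fun i j => hc i (mem_univ i) j (mem_univ j)⟩
  intro s
  induction s using Finset.induction_on with
  | empty =>
    choose c hc using fun i => card_pos.mp ((Nat.zero_le _).trans_lt (hL i))
    exact ⟨c, hc, by simp⟩
  | insert a s has ih =>
    obtain ⟨c, hcL, hc⟩ := ih
    -- `a` has fewer neighbours than colours in its list, so one of them is still free.
    obtain ⟨x, hxL, hx⟩ := exists_mem_notMem_of_card_lt_card
      (card_image_le.trans_lt (card_neighborFinset_eq_degree H a ▸ hL a) :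
        #((H.neighborFinset a).image c) < #(L a))
    set c' := update c a x
    have hc'L : ∀ i, c' i ∈ L i := fun i => by
      by_cases hi : i = a
      · subst hi; simpa [c'] using hxL
      · simpa [c', hi] using hcL i
    have ha : ∀ j, H.Adj a j → c' a ≠ c' j := fun j hj => by
      have hcj : c j ∈ (H.neighborFinset a).image c :=
        mem_image_of_mem c ((mem_neighborFinset H a j).mpr hj)
      simp only [c', update_self, update_of_ne hj.ne']
      exact fun h => hx (h ▸ hcj)
    refine ⟨c', hc'L, fun i hi j hj hij => ?_⟩
    rcases mem_insert.mp hi with rfl | hi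
    · exact ha j hij
    rcases mem_insert.mp hj with rfl | hj
    · exact (ha i hij.symm).symm
    simpa [c', ne_of_mem_of_not_mem hi has, ne_of_mem_of_not_mem hj has] using hc i hi j hj hij

end SimpleGraph

open SimpleGraph

theorem pair_virtual_graph_coloring_general {V ι : Type*} [Fintype V] [DecidableEq V]
    [Fintype ι] [DecidableEq ι]
    (G : SimpleGraph V) [DecidableRel G.Adj]
    (Δ : ℕ) (ε : ℝ) (h16 : 16 * ε * Δ < (Δ : ℝ) / 2)
    (u w : ι → V) (C : ι → Finset V)
    (hdisj : ∀ i j : ι, i ≠ j →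
      u i ≠ u j ∧ u i ≠ w j ∧ w i ≠ u j ∧ w i ≠ w j)
    (hout_u : ∀ i, (((G.neighborFinset (u i)) \ C i).card : ℝ) ≤ 4 * ε * Δ)
    (hout_w : ∀ i, (((G.neighborFinset (w i)) \ C i).card : ℝ) ≤ 4 * ε * Δ)
    (hother : ∀ i j : ι, i ≠ j → u j ∉ C i ∧ w j ∉ C i)
    (L : V → Finset (Fin Δ))
    (hL : ∀ i, (Δ : ℝ) - 8 * ε * Δ ≤ (((L (u i)) ∩ (L (w i))).card : ℝ)) :
    (∀ i : ι,
      (((Finset.univ : Finset ι).filter fun j => j ≠ i ∧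
          (G.Adj (u i) (u j) ∨ G.Adj (u i) (w j) ∨ G.Adj (w i) (u j) ∨
            G.Adj (w i) (w j))).card : ℝ) ≤ 16 * ε * Δ ∧
      ((Finset.univ : Finset ι).filter fun j => j ≠ i ∧
          (G.Adj (u i) (u j) ∨ G.Adj (u i) (w j) ∨ G.Adj (w i) (u j) ∨
            G.Adj (w i) (w j))).card < ((L (u i)) ∩ (L (w i))).card) ∧
    ∃ c : ι → Fin Δ,
      (∀ i, c i ∈ (L (u i)) ∩ (L (w i))) ∧
      ∀ i j : ι, i ≠ j → ∀ x y : V, (x = u i ∨ x = w i) → (y = u j ∨ y = w j) →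
        G.Adj x y → c i ≠ c j := by
  set H := G.virtualGraph fun k => {u k, w k}
  have hN (i : ι) : univ.filter (fun j => j ≠ i ∧ (G.Adj (u i) (u j) ∨ G.Adj (u i) (w j) ∨
      G.Adj (w i) (u j) ∨ G.Adj (w i) (w j))) = H.neighborFinset i := by
    ext j
    simp only [H, mem_filter, mem_univ, true_and, mem_neighborFinset, virtualGraph_pair_adj,
      ne_comm]
  have hdegH (i : ι) : (H.degree i : ℝ) ≤ 8 * ε * Δ := by
    have : (H.degree i : ℝ) ≤
        #(G.neighborFinset (u i) \ C i) + #(G.neighborFinset (w i) \ C i) := by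
      exact_mod_cast G.degree_virtualGraph_pair_le hdisj (hother i)
    linarith [hout_u i, hout_w i]
  have hlt (i : ι) : H.degree i < #(L (u i) ∩ L (w i)) := by
    have : (H.degree i : ℝ) < #(L (u i) ∩ L (w i)) := by
      linarith [hdegH i, hL i, Nat.cast_nonneg (α := ℝ) Δ]
    exact_mod_cast this
  obtain ⟨c, hcL, hc⟩ := H.exists_listColoring_of_degree_lt _ hlt
  refine ⟨fun i => ?_, c, hcL, fun i j hij x y hx hy hxy =>
    hc i j ⟨hij, x, by simpa using hx, y, by simpa using hy, hxy⟩⟩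
  rw [hN, card_neighborFinset_eq_degree]
  -- `0 ≤ deg i ≤ 8εΔ` forces `εΔ ≥ 0`, hence `8εΔ ≤ 16εΔ`.
  exact ⟨by linarith [hdegH i, Nat.cast_nonneg (α := ℝ) (H.degree i)], hlt i⟩

/-- Same-coloring disjoint non-adjacent pairs via the virtual graph H on pairs.
If each endpoint has at most 4εΔ neighbors outside its own almost-clique, no endpoint of
another pair lies in the almost-clique of a pair, each pair's common list has size at
least Δ - 8εΔ, and 16εΔ < Δ/2, then each pair has H-degree at most 16εΔ, strictly less
than its list size; hence the pairs can be list-colored so that adjacent pairs get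
distinct colors, yielding a proper partial coloring of G. -/
theorem pair_virtual_graph_coloring {V ι : Type*} [Fintype V] [DecidableEq V]
    [Fintype ι] [DecidableEq ι]
    (G : SimpleGraph V) [DecidableRel G.Adj]
    (Δ : ℕ) (ε : ℝ) (hε0 : 0 < ε) (h16 : 16 * ε * Δ < (Δ : ℝ) / 2)
    (hdeg : ∀ v : V, G.degree v ≤ Δ)
    (u w : ι → V) (C : ι → Finset V)
    (huC : ∀ i, u i ∈ C i) (hwC : ∀ i, w i ∈ C i)
    (hne : ∀ i, u i ≠ w i) (hnadj : ∀ i, ¬ G.Adj (u i) (w i))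
    (hdisj : ∀ i j : ι, i ≠ j →
      u i ≠ u j ∧ u i ≠ w j ∧ w i ≠ u j ∧ w i ≠ w j)
    (hout_u : ∀ i, (((G.neighborFinset (u i)) \ C i).card : ℝ) ≤ 4 * ε * Δ)
    (hout_w : ∀ i, (((G.neighborFinset (w i)) \ C i).card : ℝ) ≤ 4 * ε * Δ)
    (hother : ∀ i j : ι, i ≠ j → u j ∉ C i ∧ w j ∉ C i)
    (L : V → Finset (Fin Δ))
    (hL : ∀ i, (Δ : ℝ) - 8 * ε * Δ ≤ (((L (u i)) ∩ (L (w i))).card : ℝ)) :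
    (∀ i : ι,
      (((Finset.univ : Finset ι).filter fun j => j ≠ i ∧
          (G.Adj (u i) (u j) ∨ G.Adj (u i) (w j) ∨ G.Adj (w i) (u j) ∨
            G.Adj (w i) (w j))).card : ℝ) ≤ 16 * ε * Δ ∧
      ((Finset.univ : Finset ι).filter fun j => j ≠ i ∧
          (G.Adj (u i) (u j) ∨ G.Adj (u i) (w j) ∨ G.Adj (w i) (u j) ∨
            G.Adj (w i) (w j))).card < ((L (u i)) ∩ (L (w i))).card) ∧
    ∃ c : ι → Fin Δ,
      (∀ i, c i ∈ (L (u i)) ∩ (L (w i))) ∧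
      ∀ i j : ι, i ≠ j → ∀ x y : V, (x = u i ∨ x = w i) → (y = u j ∨ y = w j) →
        G.Adj x y → c i ≠ c j :=
  pair_virtual_graph_coloring_general G Δ ε h16 u w C hdisj hout_u hout_w hother L hL
end

section
/- Let G be a graph with maximum degree Δ and 0 < ε ≤ 1/20. Suppose D ⊆ V(G) satisfies (1−ε)Δ ≤ |D| ≤ (1+ε)Δ, every vertex of D has at most εΔ neighbors outside D, and let C = D ∪ {u ∈ V(G) : u has at least (1−4ε)Δ neighbors in D}. Then |C \ D| ≤ 2εΔ and hence |C| ≤ (1+3ε)Δ. -/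
/-- ACD extension step: if (1-ε)Δ ≤ |D| ≤ (1+ε)Δ, every vertex of D has at most εΔ
neighbors outside D, and C is D together with all vertices having at least (1-4ε)Δ
neighbors in D, then |C \ D| ≤ 2εΔ and |C| ≤ (1+3ε)Δ. -/
theorem acd_extension_size {V : Type*} [Fintype V] [DecidableEq V]
    (G : SimpleGraph V) [DecidableRel G.Adj]
    (Δ : ℕ) (hΔ : 0 < Δ) (ε : ℝ) (hε0 : 0 < ε) (hε : ε ≤ 1 / 20)
    (hdeg : ∀ v : V, G.degree v ≤ Δ)
    (D : Finset V)
    (hDlow : (1 - ε) * Δ ≤ (D.card : ℝ)) (hDhigh : (D.card : ℝ) ≤ (1 + ε) * Δ)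
    (hDout : ∀ v ∈ D, (((G.neighborFinset v) \ D).card : ℝ) ≤ ε * Δ)
    (C : Finset V)
    (hC : C = D ∪ (Finset.univ.filter
      fun u => (1 - 4 * ε) * Δ ≤ ((G.neighborFinset u ∩ D).card : ℝ))) :
    ((C \ D).card : ℝ) ≤ 2 * ε * Δ ∧ (C.card : ℝ) ≤ (1 + 3 * ε) * Δ := by
  have hΔR : (0:ℝ) < Δ := by exact_mod_cast hΔ
  -- double counting
  have e1 : ∀ u : V, G.neighborFinset u ∩ D = D.filter (fun v => G.Adj u v) := by
    intro u; ext v; simp [SimpleGraph.mem_neighborFinset, and_comm]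
  have e2 : ∀ v : V, (G.neighborFinset v) \ D = Dᶜ.filter (fun u => G.Adj v u) := by
    intro v; ext u; simp [SimpleGraph.mem_neighborFinset, and_comm]
  have h2 : ∑ u ∈ Dᶜ, (G.neighborFinset u ∩ D).card
      = ∑ v ∈ D, ((G.neighborFinset v) \ D).card := by
    simp_rw [e1, e2, Finset.card_filter]
    rw [Finset.sum_comm]
    simp_rw [G.adj_comm]
  have hsub : C \ D ⊆ Dᶜ := by
    intro u hu
    simp only [Finset.mem_compl]
    exact (Finset.mem_sdiff.mp hu).2
  have h1 : ∑ u ∈ (C \ D), (G.neighborFinset u ∩ D).card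
      ≤ ∑ u ∈ Dᶜ, (G.neighborFinset u ∩ D).card :=
    Finset.sum_le_sum_of_subset hsub
  have key : ∑ u ∈ (C \ D), ((G.neighborFinset u ∩ D).card : ℝ)
      ≤ ∑ v ∈ D, (((G.neighborFinset v) \ D).card : ℝ) := by
    exact_mod_cast h1.trans_eq h2
  have hlow : ∀ u ∈ C \ D, (1 - 4*ε) * Δ ≤ ((G.neighborFinset u ∩ D).card : ℝ) := by
    intro u hu
    rw [Finset.mem_sdiff, hC, Finset.mem_union] at hu
    rcases hu with ⟨h | h, hnd⟩
    · exact absurd h hnd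
    · simpa using (Finset.mem_filter.mp h).2
  have hsum1 : ((C \ D).card : ℝ) * ((1 - 4*ε) * Δ)
      ≤ ∑ u ∈ (C \ D), ((G.neighborFinset u ∩ D).card : ℝ) := by
    have := Finset.card_nsmul_le_sum (C \ D)
      (fun u => ((G.neighborFinset u ∩ D).card : ℝ)) ((1 - 4*ε) * Δ) hlow
    simpa [nsmul_eq_mul] using this
  have hsum2 : ∑ v ∈ D, (((G.neighborFinset v) \ D).card : ℝ)
      ≤ (D.card : ℝ) * (ε * Δ) := by
    have := Finset.sum_le_card_nsmul D
      (fun v => (((G.neighborFinset v) \ D).card : ℝ)) (ε * Δ) hDout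
    simpa [nsmul_eq_mul] using this
  have hmain : ((C \ D).card : ℝ) * ((1 - 4*ε) * Δ) ≤ (1 + ε) * Δ * (ε * Δ) := by
    calc ((C \ D).card : ℝ) * ((1 - 4*ε) * Δ)
        ≤ ∑ u ∈ (C \ D), ((G.neighborFinset u ∩ D).card : ℝ) := hsum1
      _ ≤ ∑ v ∈ D, (((G.neighborFinset v) \ D).card : ℝ) := key
      _ ≤ (D.card : ℝ) * (ε * Δ) := hsum2
      _ ≤ (1 + ε) * Δ * (ε * Δ) := by
          have hεΔ : 0 ≤ ε * Δ := by positivity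
          exact mul_le_mul_of_nonneg_right hDhigh hεΔ
  have hpart1 : ((C \ D).card : ℝ) ≤ 2 * ε * Δ := by
    have h14 : (0:ℝ) < (1 - 4*ε) * Δ := by nlinarith
    have heΔ2 : (0:ℝ) < ε * ((Δ:ℝ) * Δ) := by positivity
    nlinarith [hmain, h14, heΔ2, hε0, hε]
  refine ⟨hpart1, ?_⟩
  have hcard : (C.card : ℝ) ≤ ((C \ D).card : ℝ) + (D.card : ℝ) := by
    have h := Finset.card_sdiff_add_card C D
    have h' : C.card ≤ (C \ D).card + D.card := by
      rw [h]; exact Finset.card_le_card Finset.subset_union_left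
    exact_mod_cast h'
  calc (C.card : ℝ) ≤ ((C \ D).card : ℝ) + (D.card : ℝ) := hcard
    _ ≤ 2 * ε * Δ + (1 + ε) * Δ := add_le_add hpart1 hDhigh
    _ = (1 + 3 * ε) * Δ := by ring
end
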